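/- Let X be a topological space, 𝓕 a family of subsets of X, and λ a regular infinite cardinal. Then X is 𝓕-[λ,λ]-compact if and only if the following holds: for every λ-indexed family (C_α)_{α<λ} of closed subsets of X with C_α ⊇ C_β whenever α ≤ β < λ, if for every α < λ there exists F ∈ 𝓕 with F ⊆ C_α, then ⋂_{α<λ} C_α is nonempty. -/

import Mathlib

open Cardinal Set Topology

universe u

/-- `x` is a `lam`-complete accumulation point of the sequence `Y`. -/
def IsCompleteAccPt {X : Type u} [TopologicalSpace X] (lam : Cardinal.{u})
    {ι : Type u} (Y : ι → Set X) (x : X) : Prop :=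
  ∀ U ∈ nhds x, #{i : ι | (Y i ∩ U).Nonempty} = lam

/-- `X` is `𝓕`-[μ,λ]-compact. -/
def FMuLamCompact {X : Type u} [TopologicalSpace X] (F : Set (Set X))
    (mu lam : Cardinal.{u}) : Prop :=
  ∀ C : lam.ord.ToType → Set X, (∀ α, IsClosed (C α)) →
    (∀ Z : Set lam.ord.ToType, #Z < mu → ∃ f ∈ F, f ⊆ ⋂ α ∈ Z, C α) →
    (⋂ α, C α).Nonempty

/-!
A decreasing sequence satisfies the `𝓕`-condition on all small sets of indices as soon as it
satisfies it on single indices, because a set of fewer than `cf λ` indices is bounded and the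
sequence at an upper bound lies inside all its members. Conversely, an arbitrary sequence
`(C α)` has the same intersection as the decreasing sequence `⋂ β ≤ α, C β`, and each
initial segment `Iic α` has fewer than `λ` elements.
-/

theorem exists_forall_lt_of_mk_lt_cof {α : Type*} [LinearOrder α] {s : Set α}
    (hs : #s < Order.cof α) : ∃ x, ∀ y ∈ s, y < x :=
  not_isCofinal_iff.1 fun hcof => (Order.cof_le hcof).not_gt hs

theorem mk_Iic_ord_toType_lt {c : Cardinal} (hc : ℵ₀ ≤ c) (i : c.ord.ToType) :
    #(Iic i) < c := by
  simpa using mk_Iic_lt i (by simp) (by simpa using hc)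

section Iic

variable {ι α : Type*} [Preorder ι] (C : ι → Set α)

theorem antitone_biInter_Iic : Antitone fun i => ⋂ j ∈ Iic i, C j :=
  fun _ _ hij => biInter_subset_biInter_left (Iic_subset_Iic.mpr hij)

theorem iInter_biInter_Iic : ⋂ i, ⋂ j ∈ Iic i, C j = ⋂ i, C i :=
  Subset.antisymm (iInter_mono fun _ => biInter_subset_of_mem self_mem_Iic)
    (subset_iInter fun _ => subset_iInter₂ fun j _ => iInter_subset C j)

end Iic

section FMuLamCompact

variable {X : Type u} [TopologicalSpace X] {F : Set (Set X)} {mu lam : Cardinal.{u}}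

theorem FMuLamCompact.nonempty_iInter_of_antitone (h : FMuLamCompact F mu lam)
    (hmu : mu ≤ lam.ord.cof) {C : lam.ord.ToType → Set X} (hC : ∀ α, IsClosed (C α))
    (hC_anti : Antitone C) (hCF : ∀ α, ∃ f ∈ F, f ⊆ C α) : (⋂ α, C α).Nonempty := by
  refine h C hC fun Z hZ => ?_
  obtain ⟨b, hb⟩ := exists_forall_lt_of_mk_lt_cof
    (by rw [Ordinal.cof_toType]; exact hZ.trans_le hmu)
  obtain ⟨f, hf, hfC⟩ := hCF b
  exact ⟨f, hf, hfC.trans (subset_iInter₂ fun α hα => hC_anti (hb α hα).le)⟩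

theorem fMuLamCompact_of_antitone (hlam : ℵ₀ ≤ lam) (hmu : lam ≤ mu)
    (h : ∀ C : lam.ord.ToType → Set X, (∀ α, IsClosed (C α)) → Antitone C →
      (∀ α, ∃ f ∈ F, f ⊆ C α) → (⋂ α, C α).Nonempty) :
    FMuLamCompact F mu lam := by
  intro C hC hCF
  rw [← iInter_biInter_Iic]
  exact h _ (fun α => isClosed_biInter fun β _ => hC β) (antitone_biInter_Iic C)
    fun α => hCF _ ((mk_Iic_ord_toType_lt hlam α).trans_le hmu)

end FMuLamCompact

theorem stmt4 {X : Type u} [TopologicalSpace X] (F : Set (Set X)) (lam : Cardinal.{u})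
    (hlam : lam.IsRegular) :
    FMuLamCompact F lam lam ↔
      ∀ C : lam.ord.ToType → Set X, (∀ α, IsClosed (C α)) →
        (∀ α β, α ≤ β → C β ⊆ C α) →
        (∀ α, ∃ f ∈ F, f ⊆ C α) →
        (⋂ α, C α).Nonempty :=
  ⟨fun h _ hC hC_anti hCF => h.nonempty_iInter_of_antitone hlam.le_cof_ord hC hC_anti hCF,
    fMuLamCompact_of_antitone hlam.aleph0_le le_rfl⟩
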